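/- Let (a_n)_{n∈ℤ} and (b_n)_{n∈ℤ} be two sequences of positive reals. The infinite product probability measures ⊗_{n∈ℤ} Pois(b_n) and ⊗_{n∈ℤ} Pois(a_n) on ℕ^ℤ are mutually absolutely continuous if and only if Σ_{n∈ℤ} (√(b_n) − √(a_n))² < ∞. -/

import Mathlib

open MeasureTheory ProbabilityTheory

/-- The Poisson distribution on `ℕ` with parameter (rate) `a`. -/
noncomputable def pois (a : ℝ) : Measure ℕ := poissonMeasure a.toNNReal

/-- `IsProductOf η μ` says that `η` is the infinite product `⊗_{i} μ i` of the probability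
measures `μ i`, i.e. `η` gives each cylinder set the corresponding product value. -/
def IsProductOf {ι : Type*} [MeasurableSpace ι] (η : Measure (ι → ℕ)) (μ : ι → Measure ℕ) : Prop :=
  ∀ (F : Finset ι) (v : ι → ℕ), η {y | ∀ i ∈ F, y i = v i} = ∏ i ∈ F, μ i {v i}

/-!
This is Kakutani's dichotomy for `P = ⊗ μᵢ` and `Q = ⊗ νᵢ`, where `νᵢ` has density `φᵢ²`
with respect to `μᵢ` and the Hellinger affinity `∫ φᵢ dμᵢ` equals `exp (-sᵢ)`. For Poisson
laws, `φ(k) = e^{(a-b)/2} (√b/√a)^k` and `sᵢ = (√bᵢ - √aᵢ)² / 2`.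

If `∑ sᵢ < ∞`, the partial products `Φ_F(y) = ∏_{i ∈ F} φᵢ(yᵢ)` have unit norm in `L²(P)` and
`⟪Φ_F, Φ_G⟫ = exp (-∑_{G \ F} sᵢ)` for `F ⊆ G`, so they form a Cauchy net. Since
`∫_A Φ_G² dP = Q A` for every cylinder `A` over coordinates in `G`, the square of the limit
is a density of `Q` with respect to `P`.

If `Q ≪ P` with density `f`, apply Cauchy–Schwarz on each fibre of the coordinates in `F`,
where `Φ_F` is constant. This gives `∫ √f dP ≤ ∏_{i ∈ F} exp (-sᵢ)`, which can be made
arbitrarily small when `∑ sᵢ = ∞`. Then `f = 0` a.e., which is impossible.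
-/

open scoped ENNReal NNReal Topology
open Filter

theorem IsProductOf.eq_infinitePi {ι : Type*} [MeasurableSpace ι] {η : Measure (ι → ℕ)}
    {μ : ι → Measure ℕ} [∀ i, IsProbabilityMeasure (μ i)] (hη : IsProductOf η μ) :
    η = Measure.infinitePi μ := by
  classical
  refine IsProjectiveLimit.unique (fun F => Measure.ext_of_singleton fun z => ?_)
    (Measure.isProjectiveLimit_infinitePi μ)
  set v : ι → ℕ := fun i => if h : i ∈ F then z ⟨i, h⟩ else 0
  have hfiber : (F.restrict (π := fun _ => ℕ)) ⁻¹' {z} = {y | ∀ i ∈ F, y i = v i} := by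
    ext y
    simp +contextual [v, funext_iff]
  rw [Measure.map_apply (Finset.measurable_restrict F) (measurableSet_singleton z), hfiber, hη,
    Measure.pi_singleton, ← Finset.prod_coe_sort]
  simp [v]

theorem lintegral_infinitePi_finset_prod {ι : Type*} {X : ι → Type*}
    [∀ i, MeasurableSpace (X i)] (μ : ∀ i, Measure (X i)) [∀ i, IsProbabilityMeasure (μ i)]
    {f : ∀ i, X i → ℝ≥0∞} (hf : ∀ i, Measurable (f i)) (F : Finset ι) :
    ∫⁻ y, ∏ i ∈ F, f i (y i) ∂Measure.infinitePi μ = ∏ i ∈ F, ∫⁻ x, f i x ∂μ i := by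
  rw [lintegral_prod_eq_prod_lintegral_of_indepFun F _ (iIndepFun_infinitePi hf)
    fun i => (hf i).comp (measurable_pi_apply i)]
  exact Finset.prod_congr rfl fun i _ =>
    (measurePreserving_eval_infinitePi μ i).lintegral_comp (hf i)

theorem MeasureTheory.Measure.pi_withDensity_of_countable {κ : Type*} [Fintype κ]
    {X : κ → Type*} [∀ i, MeasurableSpace (X i)] [∀ i, Countable (X i)]
    [∀ i, MeasurableSingletonClass (X i)] {μ ν : ∀ i, Measure (X i)} [∀ i, SigmaFinite (μ i)]
    [∀ i, SigmaFinite (ν i)] {ψ : ∀ i, X i → ℝ≥0∞} (hψ : ∀ i, (μ i).withDensity (ψ i) = ν i) :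
    (Measure.pi μ).withDensity (fun z => ∏ i, ψ i (z i)) = Measure.pi ν := by
  refine Measure.ext_of_singleton fun z => ?_
  simp only [← hψ, withDensity_apply _ (measurableSet_singleton _), lintegral_singleton,
    Measure.pi_singleton, Finset.prod_mul_distrib]

theorem withDensity_eq_infinitePi_of_setLIntegral_cylinder {ι : Type*} {X : ι → Type*}
    [∀ i, MeasurableSpace (X i)] {ν : ∀ i, Measure (X i)} [∀ i, IsProbabilityMeasure (ν i)]
    {P : Measure (∀ i, X i)} {D : (∀ i, X i) → ℝ≥0∞}
    (h : ∀ (G : Finset ι) (T : Set (∀ i : G, X i)), MeasurableSet T →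
      ∫⁻ y in G.restrict ⁻¹' T, D y ∂P = Measure.infinitePi ν (G.restrict ⁻¹' T)) :
    P.withDensity D = Measure.infinitePi ν := by
  refine IsProjectiveLimit.unique (fun G => ?_) (Measure.isProjectiveLimit_infinitePi ν)
  ext T hT
  rw [Measure.map_apply (Finset.measurable_restrict G) hT,
    withDensity_apply _ (Finset.measurable_restrict G hT), h G T hT,
    ← Measure.map_apply (Finset.measurable_restrict G) hT, Measure.infinitePi_map_restrict]

theorem lintegral_rpow_half_le {α : Type*} [MeasurableSpace α] (μ : Measure α) {f : α → ℝ≥0∞}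
    (hf : AEMeasurable f μ) :
    ∫⁻ a, f a ^ (1 / 2 : ℝ) ∂μ ≤ (∫⁻ a, f a ∂μ) ^ (1 / 2 : ℝ) * μ Set.univ ^ (1 / 2 : ℝ) := by
  have h := ENNReal.lintegral_mul_le_Lp_mul_Lq μ Real.HolderConjugate.two_two
    (hf.pow_const (1 / 2 : ℝ)) (aemeasurable_const (b := (1 : ℝ≥0∞)))
  simp only [Pi.mul_apply, mul_one, ENNReal.one_rpow, lintegral_const, one_mul,
    ← ENNReal.rpow_mul] at h
  norm_num at h
  exact h

theorem lintegral_eq_tsum_setLIntegral_fiber {α β : Type*} [MeasurableSpace α]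
    [MeasurableSpace β] [Countable β] [MeasurableSingletonClass β] {μ : Measure α} {f : α → β}
    (hf : Measurable f) (g : α → ℝ≥0∞) : ∫⁻ a, g a ∂μ = ∑' b, ∫⁻ a in f ⁻¹' {b}, g a ∂μ := by
  rw [← lintegral_iUnion (fun b => hf (measurableSet_singleton b)) (pairwise_disjoint_fiber f),
    ← Set.preimage_iUnion, Set.iUnion_of_singleton, Set.preimage_univ, Measure.restrict_univ]

theorem enorm_finset_prod_coe_nnreal {α : Type*} (F : Finset α) (f : α → ℝ≥0) :
    ‖∏ i ∈ F, (f i : ℝ)‖ₑ = ∏ i ∈ F, (f i : ℝ≥0∞) := by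
  rw [← NNReal.coe_prod, NNReal.enorm_eq, ENNReal.ofNNReal_finsetProd]

section L2

variable {α E : Type*} [MeasurableSpace α] {μ : Measure α} [NormedAddCommGroup E]

theorem MeasureTheory.Lp.ofReal_norm_sq_eq_lintegral (f : Lp E 2 μ) :
    ENNReal.ofReal (‖f‖ ^ 2) = ∫⁻ a, ‖f a‖ₑ ^ 2 ∂μ := by
  rw [Lp.norm_def, ENNReal.ofReal_pow ENNReal.toReal_nonneg,
    ENNReal.ofReal_toReal (Lp.eLpNorm_ne_top f)]
  simpa using eLpNorm_nnreal_pow_eq_lintegral (f := f) (μ := μ) (p := 2) two_ne_zero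

theorem MeasureTheory.Lp.tendsto_setLIntegral_enorm_sq [NormedSpace ℝ E] {β : Type*}
    {l : Filter β} {X : β → Lp E 2 μ} {x : Lp E 2 μ} (h : Tendsto X l (𝓝 x)) (A : Set α) :
    Tendsto (fun b => ∫⁻ a in A, ‖X b a‖ₑ ^ 2 ∂μ) l (𝓝 (∫⁻ a in A, ‖x a‖ₑ ^ 2 ∂μ)) := by
  have hR : ∀ y, ∫⁻ a in A, ‖y a‖ₑ ^ 2 ∂μ
      = ENNReal.ofReal (‖LpToLpRestrictCLM α E ℝ μ 2 A y‖ ^ 2) := fun y => by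
    rw [Lp.ofReal_norm_sq_eq_lintegral]
    exact lintegral_congr_ae ((LpToLpRestrictCLM_coeFn ℝ A y).mono fun a ha => by simp only [ha])
  simp_rw [hR]
  exact ENNReal.tendsto_ofReal
    ((((LpToLpRestrictCLM α E ℝ μ 2 A).continuous.tendsto x).comp h).norm.pow 2)

end L2

theorem cauchySeq_of_inner_eq_exp_neg_sum {E ι : Type*} [NormedAddCommGroup E]
    [InnerProductSpace ℝ E] [DecidableEq ι] {X : Finset ι → E} {s : ι → ℝ} (hs0 : ∀ i, 0 ≤ s i)
    (hs : Summable s) (hnorm : ∀ F, ‖X F‖ = 1)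
    (hinner : ∀ F G, F ⊆ G → inner ℝ (X F) (X G) = Real.exp (-∑ i ∈ G \ F, s i)) :
    CauchySeq X := by
  have htail : Tendsto (fun F : Finset ι => 2 - 2 * Real.exp (-(∑' i, s i - ∑ i ∈ F, s i)))
      atTop (𝓝 0) := by
    have h := ((tendsto_const_nhds (x := ∑' i, s i)).sub hs.hasSum).neg.rexp.const_mul 2
    simpa using (tendsto_const_nhds (x := (2 : ℝ))).sub h
  rw [Metric.cauchySeq_iff']
  intro ε hε
  obtain ⟨F, hF⟩ := (htail.eventually (gt_mem_nhds (pow_pos hε 2))).exists_forall_of_atTop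
  refine ⟨F, fun G hFG => ?_⟩
  have hsum : ∑ i ∈ G \ F, s i ≤ ∑' i, s i - ∑ i ∈ F, s i := by
    rw [Finset.sum_sdiff_eq_sub hFG]
    exact sub_le_sub_right (hs.sum_le_tsum G fun i _ => hs0 i) _
  have hdist : dist (X G) (X F) ^ 2 < ε ^ 2 := calc
    dist (X G) (X F) ^ 2 = 2 - 2 * Real.exp (-∑ i ∈ G \ F, s i) := by
      rw [dist_eq_norm, norm_sub_sq_real, hnorm, hnorm, real_inner_comm, hinner F G hFG]
      ring
    _ ≤ 2 - 2 * Real.exp (-(∑' i, s i - ∑ i ∈ F, s i)) := by gcongr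
    _ < ε ^ 2 := hF F le_rfl
  exact lt_of_pow_lt_pow_left₀ 2 hε.le hdist

section Kakutani

variable {ι : Type*} {μ ν : ι → Measure ℕ} [∀ i, IsProbabilityMeasure (μ i)]
  [∀ i, IsProbabilityMeasure (ν i)] {φ : ι → ℕ → ℝ≥0}

theorem measurable_finset_prod_apply {M : Type*} [CommMonoid M] [MeasurableSpace M]
    [MeasurableMul₂ M] (g : ι → ℕ → M) (F : Finset ι) :
    Measurable fun y : ι → ℕ => ∏ i ∈ F, g i (y i) :=
  Finset.measurable_prod F fun i _ => (measurable_of_countable (g i)).comp (measurable_pi_apply i)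

theorem setLIntegral_restrict_preimage_finset_prod_sq
    (hφ : ∀ i, (μ i).withDensity (fun k => (φ i k : ℝ≥0∞) ^ 2) = ν i) (F : Finset ι)
    (T : Set (F → ℕ)) :
    ∫⁻ y in F.restrict ⁻¹' T, ∏ i ∈ F, (φ i (y i) : ℝ≥0∞) ^ 2 ∂Measure.infinitePi μ
      = Measure.infinitePi ν (F.restrict ⁻¹' T) := by
  have hT : MeasurableSet T := T.to_countable.measurableSet
  set h : (F → ℕ) → ℝ≥0∞ := fun z => ∏ i : F, (φ i (z i) : ℝ≥0∞) ^ 2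
  have hpi : (Measure.pi fun i : F => μ i).withDensity h = Measure.pi fun i : F => ν i :=
    Measure.pi_withDensity_of_countable (ψ := fun (i : F) k => (φ i k : ℝ≥0∞) ^ 2) fun i => hφ i
  calc ∫⁻ y in F.restrict ⁻¹' T, ∏ i ∈ F, (φ i (y i) : ℝ≥0∞) ^ 2 ∂Measure.infinitePi μ
      = ∫⁻ y in F.restrict ⁻¹' T, h (F.restrict y) ∂Measure.infinitePi μ :=
        lintegral_congr fun y => (Finset.prod_coe_sort F fun i => (φ i (y i) : ℝ≥0∞) ^ 2).symm
    _ = ∫⁻ z in T, h z ∂(Measure.infinitePi μ).map F.restrict :=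
        (setLIntegral_map hT (measurable_of_countable h) (Finset.measurable_restrict F)).symm
    _ = Measure.infinitePi ν (F.restrict ⁻¹' T) := by
        rw [Measure.infinitePi_map_restrict, ← withDensity_apply _ hT, hpi,
          ← Measure.infinitePi_map_restrict, Measure.map_apply (Finset.measurable_restrict F) hT]

theorem lintegral_finset_prod_mul_finset_prod [DecidableEq ι]
    (hφ : ∀ i, (μ i).withDensity (fun k => (φ i k : ℝ≥0∞) ^ 2) = ν i) {F G : Finset ι}
    (hFG : F ⊆ G) :
    ∫⁻ y, (∏ i ∈ F, (φ i (y i) : ℝ≥0∞)) * ∏ i ∈ G, (φ i (y i) : ℝ≥0∞) ∂Measure.infinitePi μ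
      = ∏ i ∈ G \ F, ∫⁻ k, (φ i k : ℝ≥0∞) ∂μ i := by
  have hsq : ∀ i, ∫⁻ k, (φ i k : ℝ≥0∞) ^ 2 ∂μ i = 1 := fun i => by
    rw [← setLIntegral_univ, ← withDensity_apply _ MeasurableSet.univ, hφ, measure_univ]
  set g : ι → ℕ → ℝ≥0∞ := fun i k => if i ∈ F then (φ i k : ℝ≥0∞) ^ 2 else φ i k
  have hg : ∀ y : ι → ℕ, (∏ i ∈ F, (φ i (y i) : ℝ≥0∞)) * ∏ i ∈ G, (φ i (y i) : ℝ≥0∞)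
      = ∏ i ∈ G, g i (y i) := fun y => by
    rw [← Finset.prod_sdiff hFG, ← Finset.prod_sdiff hFG (f := fun i => g i (y i)),
      Finset.prod_congr rfl fun i hi => if_neg (Finset.mem_sdiff.1 hi).2,
      Finset.prod_congr rfl fun i hi => if_pos hi]
    simp only [pow_two, Finset.prod_mul_distrib]
    ring
  calc ∫⁻ y, (∏ i ∈ F, (φ i (y i) : ℝ≥0∞)) * ∏ i ∈ G, (φ i (y i) : ℝ≥0∞) ∂Measure.infinitePi μ
      = ∏ i ∈ G, ∫⁻ k, g i k ∂μ i := by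
        rw [lintegral_congr hg,
          lintegral_infinitePi_finset_prod μ (fun i => measurable_of_countable _)]
    _ = (∏ i ∈ G \ F, ∫⁻ k, (φ i k : ℝ≥0∞) ∂μ i) * ∏ i ∈ F, 1 := by
        rw [← Finset.prod_sdiff hFG]
        congr 1
        · exact Finset.prod_congr rfl fun i hi => by simp only [g, if_neg (Finset.mem_sdiff.1 hi).2]
        · exact Finset.prod_congr rfl fun i hi => by simp only [g, if_pos hi, hsq]
    _ = ∏ i ∈ G \ F, ∫⁻ k, (φ i k : ℝ≥0∞) ∂μ i := by simp

theorem memLp_finset_prod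
    (hφ : ∀ i, (μ i).withDensity (fun k => (φ i k : ℝ≥0∞) ^ 2) = ν i) (F : Finset ι) :
    MemLp (fun y => ∏ i ∈ F, (φ i (y i) : ℝ)) 2 (Measure.infinitePi μ) := by
  classical
  refine ⟨(measurable_finset_prod_apply (fun i k => (φ i k : ℝ)) F).aestronglyMeasurable, ?_⟩
  have h := lintegral_finset_prod_mul_finset_prod hφ (subset_refl F)
  rw [Finset.sdiff_self, Finset.prod_empty] at h
  rw [eLpNorm_lt_top_iff_lintegral_rpow_enorm_lt_top two_ne_zero ENNReal.ofNat_ne_top]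
  simp only [enorm_finset_prod_coe_nnreal, ENNReal.toReal_ofNat, ENNReal.rpow_two, pow_two, h]
  exact ENNReal.one_lt_top

theorem integral_finset_prod_mul_finset_prod [DecidableEq ι]
    (hφ : ∀ i, (μ i).withDensity (fun k => (φ i k : ℝ≥0∞) ^ 2) = ν i) {s : ι → ℝ}
    (hρ : ∀ i, ∫⁻ k, (φ i k : ℝ≥0∞) ∂μ i = ENNReal.ofReal (Real.exp (-s i)))
    {F G : Finset ι} (hFG : F ⊆ G) :
    ∫ y, (∏ i ∈ F, (φ i (y i) : ℝ)) * ∏ i ∈ G, (φ i (y i) : ℝ) ∂Measure.infinitePi μ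
      = Real.exp (-∑ i ∈ G \ F, s i) := by
  have hm : Measurable fun y : ι → ℕ => (∏ i ∈ F, (φ i (y i) : ℝ)) * ∏ i ∈ G, (φ i (y i) : ℝ) :=
    ((measurable_finset_prod_apply (fun i k => (φ i k : ℝ)) F).mul
      (measurable_finset_prod_apply (fun i k => (φ i k : ℝ)) G) :)
  rw [integral_eq_lintegral_of_nonneg_ae (ae_of_all _ fun y => by positivity)
    hm.aestronglyMeasurable]
  simp only [← NNReal.coe_prod, ← NNReal.coe_mul, ENNReal.ofReal_coe_nnreal, ENNReal.coe_mul,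
    ENNReal.ofNNReal_finsetProd]
  rw [lintegral_finset_prod_mul_finset_prod hφ hFG, Finset.prod_congr rfl fun i _ => hρ i,
    ← ENNReal.ofReal_prod_of_nonneg fun i _ => (Real.exp_pos _).le,
    ENNReal.toReal_ofReal (Finset.prod_nonneg fun i _ => (Real.exp_pos _).le), ← Real.exp_sum,
    Finset.sum_neg_distrib]

theorem absolutelyContinuous_infinitePi_of_summable
    (hφ : ∀ i, (μ i).withDensity (fun k => (φ i k : ℝ≥0∞) ^ 2) = ν i) {s : ι → ℝ}
    (hs0 : ∀ i, 0 ≤ s i)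
    (hρ : ∀ i, ∫⁻ k, (φ i k : ℝ≥0∞) ∂μ i = ENNReal.ofReal (Real.exp (-s i)))
    (hs : Summable s) : Measure.infinitePi ν ≪ Measure.infinitePi μ := by
  classical
  set X : Finset ι → Lp ℝ 2 (Measure.infinitePi μ) := fun F => (memLp_finset_prod hφ F).toLp _
  have hinner : ∀ F G, F ⊆ G → inner ℝ (X F) (X G) = Real.exp (-∑ i ∈ G \ F, s i) := by
    intro F G hFG
    rw [L2.inner_def, ← integral_finset_prod_mul_finset_prod hφ hρ hFG]
    refine integral_congr_ae ?_
    filter_upwards [(memLp_finset_prod hφ F).coeFn_toLp, (memLp_finset_prod hφ G).coeFn_toLp]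
      with y hF hG
    simp only [X, hF, hG, RCLike.inner_apply, conj_trivial, mul_comm]
  have hnorm : ∀ F, ‖X F‖ = 1 := fun F => by
    have h := hinner F F (subset_refl F)
    rwa [Finset.sdiff_self, Finset.sum_empty, neg_zero, Real.exp_zero,
      real_inner_self_eq_norm_sq, pow_eq_one_iff_of_nonneg (norm_nonneg _) two_ne_zero] at h
  obtain ⟨x, hx⟩ := cauchySeq_tendsto_of_complete
    (cauchySeq_of_inner_eq_exp_neg_sum hs0 hs hnorm hinner)
  have hcyl : ∀ (G : Finset ι) (T : Set (G → ℕ)),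
      ∫⁻ y in G.restrict ⁻¹' T, ‖x y‖ₑ ^ 2 ∂Measure.infinitePi μ
        = Measure.infinitePi ν (G.restrict ⁻¹' T) := by
    intro G T
    refine tendsto_nhds_unique (Lp.tendsto_setLIntegral_enorm_sq hx _)
      (tendsto_const_nhds.congr' ?_)
    filter_upwards [eventually_ge_atTop G] with H hGH
    have hT : G.restrict ⁻¹' T
        = H.restrict (π := fun _ => ℕ) ⁻¹' (Finset.restrict₂ (π := fun _ => ℕ) hGH ⁻¹' T) := by
      rw [← Set.preimage_comp, Finset.restrict₂_comp_restrict]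
    rw [hT, ← setLIntegral_restrict_preimage_finset_prod_sq hφ H]
    refine lintegral_congr_ae (ae_restrict_of_ae ?_)
    filter_upwards [(memLp_finset_prod hφ H).coeFn_toLp] with y hy
    rw [hy, enorm_finset_prod_coe_nnreal, Finset.prod_pow]
  rw [← withDensity_eq_infinitePi_of_setLIntegral_cylinder fun G T _ => hcyl G T]
  exact withDensity_absolutelyContinuous _ _

theorem setLIntegral_rnDeriv_rpow_half_le_of_fiber
    (hφ : ∀ i, (μ i).withDensity (fun k => (φ i k : ℝ≥0∞) ^ 2) = ν i)
    (hνμ : Measure.infinitePi ν ≪ Measure.infinitePi μ) {F : Finset ι} (v : F → ℕ) :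
    ∫⁻ y in F.restrict ⁻¹' {v},
        (Measure.infinitePi ν).rnDeriv (Measure.infinitePi μ) y ^ (1 / 2 : ℝ) ∂Measure.infinitePi μ
      ≤ ∫⁻ y in F.restrict ⁻¹' {v}, ∏ i ∈ F, (φ i (y i) : ℝ≥0∞) ∂Measure.infinitePi μ := by
  set P := Measure.infinitePi μ
  set Q := Measure.infinitePi ν
  set S : Set (ι → ℕ) := F.restrict ⁻¹' {v}
  have hS : MeasurableSet S := Finset.measurable_restrict F (measurableSet_singleton v)
  set c := ∏ i : F, (φ i (v i) : ℝ≥0∞)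
  have hconst : ∀ y ∈ S, ∏ i ∈ F, (φ i (y i) : ℝ≥0∞) = c := fun y hy => by
    have hyv : F.restrict y = v := hy
    rw [← Finset.prod_coe_sort]
    simp only [c, ← hyv, Finset.restrict]
  have hQS : Q S = c ^ 2 * P S := by
    rw [← setLIntegral_restrict_preimage_finset_prod_sq hφ F {v},
      setLIntegral_congr_fun hS fun y hy => by rw [Finset.prod_pow, hconst y hy],
      setLIntegral_const]
  calc ∫⁻ y in S, Q.rnDeriv P y ^ (1 / 2 : ℝ) ∂P
      ≤ (∫⁻ y in S, Q.rnDeriv P y ∂P) ^ (1 / 2 : ℝ) * P.restrict S Set.univ ^ (1 / 2 : ℝ) :=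
        lintegral_rpow_half_le _ (Measure.measurable_rnDeriv Q P).aemeasurable
    _ = ((c * P S) ^ 2) ^ (1 / 2 : ℝ) := by
        rw [← withDensity_apply _ hS, Measure.withDensity_rnDeriv_eq Q P hνμ, hQS,
          Measure.restrict_apply_univ, ← ENNReal.mul_rpow_of_nonneg _ _ (by norm_num)]
        ring_nf
    _ = ∫⁻ y in S, ∏ i ∈ F, (φ i (y i) : ℝ≥0∞) ∂P := by
        rw [setLIntegral_congr_fun hS hconst, setLIntegral_const, ← ENNReal.rpow_natCast,
          ← ENNReal.rpow_mul]
        norm_num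

theorem lintegral_rnDeriv_infinitePi_rpow_half_le
    (hφ : ∀ i, (μ i).withDensity (fun k => (φ i k : ℝ≥0∞) ^ 2) = ν i)
    (hνμ : Measure.infinitePi ν ≪ Measure.infinitePi μ) (F : Finset ι) :
    ∫⁻ y, (Measure.infinitePi ν).rnDeriv (Measure.infinitePi μ) y ^ (1 / 2 : ℝ)
        ∂Measure.infinitePi μ ≤ ∏ i ∈ F, ∫⁻ k, (φ i k : ℝ≥0∞) ∂μ i := by
  have hF := Finset.measurable_restrict (X := fun _ => ℕ) F
  rw [lintegral_eq_tsum_setLIntegral_fiber hF, ← lintegral_infinitePi_finset_prod μ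
    (f := fun i k => (φ i k : ℝ≥0∞)) (fun i => measurable_of_countable _) F,
    lintegral_eq_tsum_setLIntegral_fiber hF]
  exact ENNReal.tsum_le_tsum (setLIntegral_rnDeriv_rpow_half_le_of_fiber hφ hνμ)

theorem not_absolutelyContinuous_infinitePi_of_not_summable
    (hφ : ∀ i, (μ i).withDensity (fun k => (φ i k : ℝ≥0∞) ^ 2) = ν i) {s : ι → ℝ}
    (hs0 : ∀ i, 0 ≤ s i)
    (hρ : ∀ i, ∫⁻ k, (φ i k : ℝ≥0∞) ∂μ i = ENNReal.ofReal (Real.exp (-s i)))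
    (hs : ¬ Summable s) : ¬ Measure.infinitePi ν ≪ Measure.infinitePi μ := by
  intro hνμ
  set f := (Measure.infinitePi ν).rnDeriv (Measure.infinitePi μ)
  have hbound : ∀ C : ℝ, ∫⁻ y, f y ^ (1 / 2 : ℝ) ∂Measure.infinitePi μ
      ≤ ENNReal.ofReal (Real.exp (-C)) := by
    intro C
    obtain ⟨F, hF⟩ : ∃ F : Finset ι, C < ∑ i ∈ F, s i := by
      by_contra! h
      exact hs (summable_of_sum_le hs0 h)
    calc ∫⁻ y, f y ^ (1 / 2 : ℝ) ∂Measure.infinitePi μ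
        ≤ ∏ i ∈ F, ∫⁻ k, (φ i k : ℝ≥0∞) ∂μ i :=
          lintegral_rnDeriv_infinitePi_rpow_half_le hφ hνμ F
      _ = ENNReal.ofReal (Real.exp (-∑ i ∈ F, s i)) := by
          rw [Finset.prod_congr rfl fun i _ => hρ i,
            ← ENNReal.ofReal_prod_of_nonneg fun i _ => (Real.exp_pos _).le, ← Real.exp_sum,
            Finset.sum_neg_distrib]
      _ ≤ ENNReal.ofReal (Real.exp (-C)) := by gcongr
  have hzero : ∫⁻ y, f y ^ (1 / 2 : ℝ) ∂Measure.infinitePi μ = 0 := by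
    have h : Tendsto (fun C : ℝ => ENNReal.ofReal (Real.exp (-C))) atTop (𝓝 0) := by
      simpa using ENNReal.tendsto_ofReal Real.tendsto_exp_neg_atTop_nhds_zero
    exact le_antisymm (ge_of_tendsto' h hbound) bot_le
  have hf : f =ᵐ[Measure.infinitePi μ] 0 := by
    filter_upwards [(lintegral_eq_zero_iff
      ((Measure.measurable_rnDeriv _ _).pow_const _)).1 hzero] with y hy
    exact (ENNReal.rpow_eq_zero_iff_of_pos (by norm_num)).1 hy
  refine IsProbabilityMeasure.ne_zero (Measure.infinitePi ν) ?_
  rw [← Measure.withDensity_rnDeriv_eq _ _ hνμ, withDensity_congr_ae hf, withDensity_zero]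

theorem infinitePi_absolutelyContinuous_iff_summable
    (hφ : ∀ i, (μ i).withDensity (fun k => (φ i k : ℝ≥0∞) ^ 2) = ν i) {s : ι → ℝ}
    (hs0 : ∀ i, 0 ≤ s i)
    (hρ : ∀ i, ∫⁻ k, (φ i k : ℝ≥0∞) ∂μ i = ENNReal.ofReal (Real.exp (-s i))) :
    Measure.infinitePi ν ≪ Measure.infinitePi μ ↔ Summable s :=
  ⟨fun h => by_contra fun hs => not_absolutelyContinuous_infinitePi_of_not_summable hφ hs0 hρ hs h,
    absolutelyContinuous_infinitePi_of_summable hφ hs0 hρ⟩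

end Kakutani

section Poisson

open Real

instance (a : ℝ) : IsProbabilityMeasure (pois a) := by
  unfold pois
  infer_instance

theorem pois_singleton {a : ℝ} (ha : 0 ≤ a) (k : ℕ) :
    pois a {k} = ENNReal.ofReal (exp (-a) * a ^ k / k.factorial) := by
  rw [pois, poissonMeasure_singleton, Real.coe_toNNReal a ha]

/-- `√(Pois(b){k} / Pois(a){k}) = √(e^{a-b} (b/a)^k)`. -/
noncomputable def sqrtDensityPois (a b : ℝ) (k : ℕ) : ℝ≥0 :=
  Real.toNNReal (exp ((a - b) / 2) * (√b / √a) ^ k)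

variable {a b : ℝ}

theorem pois_withDensity_sqrtDensityPois_sq (ha : 0 < a) (hb : 0 < b) :
    (pois a).withDensity (fun k => (sqrtDensityPois a b k : ℝ≥0∞) ^ 2) = pois b := by
  refine Measure.ext_of_singleton fun k => ?_
  have hexp : exp ((a - b) / 2) ^ 2 * exp (-a) = exp (-b) := by
    rw [sq, ← exp_add, ← exp_add]
    ring_nf
  have hpow : ((√b / √a) ^ 2) ^ k * a ^ k = b ^ k := by
    rw [div_pow, sq_sqrt hb.le, sq_sqrt ha.le, div_pow, div_mul_cancel₀ _ (pow_ne_zero k ha.ne')]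
  rw [withDensity_apply _ (measurableSet_singleton k), lintegral_singleton, pois_singleton ha.le,
    pois_singleton hb.le, sqrtDensityPois, ← ENNReal.ofReal.eq_def,
    ← ENNReal.ofReal_pow (by positivity), ← ENNReal.ofReal_mul (by positivity)]
  congr 1
  calc (exp ((a - b) / 2) * (√b / √a) ^ k) ^ 2 * (exp (-a) * a ^ k / k.factorial)
      = exp ((a - b) / 2) ^ 2 * exp (-a) * (((√b / √a) ^ 2) ^ k * a ^ k) / k.factorial := by
        ring
    _ = exp (-b) * b ^ k / k.factorial := by rw [hexp, hpow]

theorem lintegral_sqrtDensityPois (ha : 0 < a) (hb : 0 < b) :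
    ∫⁻ k, (sqrtDensityPois a b k : ℝ≥0∞) ∂pois a
      = ENNReal.ofReal (exp (-((√b - √a) ^ 2 / 2))) := by
  have hterm : ∀ k : ℕ, (sqrtDensityPois a b k : ℝ≥0∞) * pois a {k}
      = ENNReal.ofReal (exp (-((a + b) / 2)) * ((√a * √b) ^ k / k.factorial)) := fun k => by
    rw [pois_singleton ha.le, sqrtDensityPois, ← ENNReal.ofReal.eq_def,
      ← ENNReal.ofReal_mul (by positivity)]
    congr 1
    have hexp : exp ((a - b) / 2) * exp (-a) = exp (-((a + b) / 2)) := by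
      rw [← exp_add]
      ring_nf
    have hpow : (√b / √a) ^ k * a ^ k = (√a * √b) ^ k := by
      rw [← mul_pow]
      congr 1
      calc √b / √a * a = √b / √a * (√a * √a) := by rw [mul_self_sqrt ha.le]
        _ = √a * √b := by field_simp [(sqrt_pos.2 ha).ne']
    calc exp ((a - b) / 2) * (√b / √a) ^ k * (exp (-a) * a ^ k / k.factorial)
        = exp ((a - b) / 2) * exp (-a) * ((√b / √a) ^ k * a ^ k / k.factorial) := by ring
      _ = _ := by rw [hexp, hpow]
  have hsum : HasSum (fun k : ℕ => exp (-((a + b) / 2)) * ((√a * √b) ^ k / k.factorial))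
      (exp (-((√b - √a) ^ 2 / 2))) := by
    have hexp : -((√b - √a) ^ 2 / 2) = -((a + b) / 2) + √a * √b := by
      rw [sub_sq, sq_sqrt ha.le, sq_sqrt hb.le]
      ring
    rw [hexp, exp_add, Real.exp_eq_exp_ℝ]
    exact (NormedSpace.expSeries_div_hasSum_exp (√a * √b)).mul_left _
  rw [lintegral_countable']
  simp_rw [hterm]
  rw [← ENNReal.ofReal_tsum_of_nonneg (fun k => by positivity) hsum.summable, hsum.tsum_eq]

theorem infinitePi_pois_absolutelyContinuous_iff {ι : Type*} {a b : ι → ℝ}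
    (ha : ∀ i, 0 < a i) (hb : ∀ i, 0 < b i) :
    Measure.infinitePi (fun i => pois (b i)) ≪ Measure.infinitePi (fun i => pois (a i))
      ↔ Summable fun i => (√(b i) - √(a i)) ^ 2 := by
  rw [infinitePi_absolutelyContinuous_iff_summable
    (fun i => pois_withDensity_sqrtDensityPois_sq (ha i) (hb i)) (fun i => by positivity)
    (fun i => lintegral_sqrtDensityPois (ha i) (hb i))]
  exact summable_div_const_iff two_ne_zero

end Poisson

theorem stmt5_general (a b : ℤ → ℝ) (ha : ∀ n, 0 < a n) (hb : ∀ n, 0 < b n)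
    (η η' : Measure (ℤ → ℕ))
    (hη : IsProductOf η fun n => pois (a n))
    (hη' : IsProductOf η' fun n => pois (b n)) :
    (η' ≪ η ∧ η ≪ η') ↔
      Summable fun n : ℤ => (Real.sqrt (b n) - Real.sqrt (a n)) ^ 2 := by
  rw [hη.eq_infinitePi, hη'.eq_infinitePi, infinitePi_pois_absolutelyContinuous_iff ha hb,
    infinitePi_pois_absolutelyContinuous_iff hb ha]
  simp_rw [sub_sq_comm (√(a _)), and_self]

/-- For two sequences `(a_n)`, `(b_n)` of positive reals, the infinite product measures
`⊗_{n∈ℤ} Pois(b_n)` and `⊗_{n∈ℤ} Pois(a_n)` on `ℕ^ℤ` are mutually absolutely continuous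
if and only if  `Σ_{n∈ℤ} (√(b_n) - √(a_n))² < ∞`. -/
theorem stmt5 (a b : ℤ → ℝ) (ha : ∀ n, 0 < a n) (hb : ∀ n, 0 < b n)
    (η η' : Measure (ℤ → ℕ)) [IsProbabilityMeasure η] [IsProbabilityMeasure η']
    (hη : IsProductOf η fun n => pois (a n))
    (hη' : IsProductOf η' fun n => pois (b n)) :
    (η' ≪ η ∧ η ≪ η') ↔
      Summable fun n : ℤ => (Real.sqrt (b n) - Real.sqrt (a n)) ^ 2 :=
  stmt5_general a b ha hb η η' hη hη'
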